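/- arXiv:2510.18168 — 3 statements merged into one kernel-verified Lean document; each statement's English description precedes it below -/
import Mathlib

section
/- Let f : ℂ → ℂ be C¹ with f(0) = 0, satisfying Im(z̄ f(z)) = 0 for all z ∈ ℂ, and suppose there exists V ∈ C¹(ℂ, ℝ) with V(0) = 0 and f(z) = ∂V/∂z̄. Then V(z) depends only on |z|, i.e., V(e^{iθ}z) = V(z) for all z ∈ ℂ and θ ∈ ℝ. -/
open Complex

/-! The angular derivative of `V` at `w` is `dV_w (i w) = 2 Im (w̄ ∂V/∂z̄ (w))`, which (A2) forces
to vanish; so `V` is constant along every circle `θ ↦ e^{iθ} z`. -/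

theorem im_conj_mul_wirtinger (L : ℂ →L[ℝ] ℝ) (w : ℂ) :
    ((starRingEnd ℂ) w * ((1 / 2) * ((L 1 : ℂ) + I * (L I : ℂ)))).im = L (I * w) / 2 := by
  have hIw : I * w = w.re • I + (-w.im) • (1 : ℂ) := by
    simp [Complex.ext_iff]
  rw [hIw, map_add, map_smul, map_smul]
  simp only [mul_im, mul_re, conj_re, conj_im, add_re, add_im, ofReal_re, ofReal_im,
    I_re, I_im, smul_eq_mul]
  norm_num
  ring

theorem hasDerivAt_exp_ofReal_mul_I_mul (z : ℂ) (t : ℝ) :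
    HasDerivAt (fun s : ℝ => exp (s * I) * z) (I * (exp (t * I) * z)) t := by
  have hlin : HasDerivAt (fun s : ℝ => (s : ℂ) * I) I t := by
    simpa using (ofRealCLM.hasDerivAt (x := t)).mul_const I
  exact (hlin.cexp.mul_const z).congr_deriv (by ring)

theorem apply_exp_mul_eq_of_fderiv_I_mul_eq_zero {V : ℂ → ℝ} (hV : Differentiable ℝ V)
    (hrot : ∀ w, fderiv ℝ V w (I * w) = 0) (z : ℂ) (θ : ℝ) :
    V (exp (θ * I) * z) = V z := by
  have hderiv : ∀ t : ℝ, HasDerivAt (fun s : ℝ => V (exp (s * I) * z)) 0 t := fun t => by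
    have h := (hV _).hasFDerivAt.comp_hasDerivAt t (hasDerivAt_exp_ofReal_mul_I_mul z t)
    rwa [hrot] at h
  simpa using is_const_of_deriv_eq_zero (fun t => (hderiv t).differentiableAt)
    (fun t => (hderiv t).deriv) θ 0

theorem stmt0_general (f : ℂ → ℂ) (V : ℂ → ℝ)
    (hA2 : ∀ z : ℂ, ((starRingEnd ℂ) z * f z).im = 0)
    (hV : ContDiff ℝ 1 V)
    (hA3 : ∀ z : ℂ,
      f z = (1 / 2) * ((fderiv ℝ V z 1 : ℂ) + Complex.I * (fderiv ℝ V z Complex.I : ℂ))) :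
    ∀ (z : ℂ) (θ : ℝ), V (Complex.exp (θ * Complex.I) * z) = V z := by
  refine apply_exp_mul_eq_of_fderiv_I_mul_eq_zero (hV.differentiable one_ne_zero) fun w => ?_
  have h := hA2 w
  rw [hA3 w, im_conj_mul_wirtinger] at h
  linarith

/-- If `f : ℂ → ℂ` is C¹ with `f 0 = 0`, satisfies (A2)
`Im (conj z * f z) = 0`, and (A3) `f = ∂V/∂z̄` for a real-valued C¹ function `V`
with `V 0 = 0` (Wirtinger derivative, identifying ℂ with ℝ²), then `V` depends
only on `|z|`: `V (exp (θ i) * z) = V z` for all `z`, `θ`. -/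
theorem stmt0 (f : ℂ → ℂ) (V : ℂ → ℝ)
    (hf : ContDiff ℝ 1 f) (hf0 : f 0 = 0)
    (hA2 : ∀ z : ℂ, ((starRingEnd ℂ) z * f z).im = 0)
    (hV : ContDiff ℝ 1 V) (hV0 : V 0 = 0)
    (hA3 : ∀ z : ℂ,
      f z = (1 / 2) * ((fderiv ℝ V z 1 : ℂ) + Complex.I * (fderiv ℝ V z Complex.I : ℂ))) :
    ∀ (z : ℂ) (θ : ℝ), V (Complex.exp (θ * Complex.I) * z) = V z :=
  stmt0_general f V hA2 hV hA3
end

section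
/- Let f : ℂ → ℂ satisfy Im(z̄ f(z)) = 0 for all z ∈ ℂ and f(z) = ∂V/∂z̄ for some real-valued C¹ function V with V(0) = 0. Then f is gauge invariant: f(e^{iθ}z) = e^{iθ} f(z) for all z ∈ ℂ and θ ∈ ℝ. -/
/-!
By (A3), `Im (z̄ f z)` is half the derivative of `V` at `z` in the direction `i z`, so (A2) says
that `V` is constant along circles about the origin: `V (c z) = V z` for `|c| = 1`. Differentiating
this identity gives `dV_z = dV_{cz} ∘ (c ·)`, and `∂/∂z̄` turns precomposition with `c ·` into
multiplication by `c̄`. Hence `f z = c̄ f (c z)`, i.e. `f (c z) = c f z`.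
-/

open Complex ComplexConjugate

/-- The Wirtinger derivative `∂/∂z̄` of a real-linear functional `D = dV`. -/
noncomputable def dbar (D : ℂ →L[ℝ] ℝ) : ℂ :=
  (1 / 2) * ((D 1 : ℂ) + I * (D I : ℂ))

lemma apply_eq_re_mul_add_im_mul (D : ℂ →L[ℝ] ℝ) (w : ℂ) :
    D w = w.re * D 1 + w.im * D I := by
  calc D w = D (w.re • 1 + w.im • I) := by congr 1; apply Complex.ext <;> simp
    _ = w.re * D 1 + w.im * D I := by simp only [map_add, map_smul, smul_eq_mul]

lemma im_conj_mul_dbar (D : ℂ →L[ℝ] ℝ) (z : ℂ) :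
    (conj z * dbar D).im = D (I * z) / 2 := by
  rw [apply_eq_re_mul_add_im_mul D (I * z)]
  simp only [dbar, mul_im, mul_re, conj_re, conj_im, add_re, add_im, ofReal_re, ofReal_im, I_re,
    I_im, div_ofNat_re, div_ofNat_im, one_re, one_im]
  ring

lemma dbar_comp_mul (D : ℂ →L[ℝ] ℝ) (c : ℂ) :
    dbar (D.comp (ContinuousLinearMap.mul ℝ ℂ c)) = conj c * dbar D := by
  have hc : D c = c.re * D 1 + c.im * D I := apply_eq_re_mul_add_im_mul D c
  have hcI : D (c * I) = -c.im * D 1 + c.re * D I := by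
    rw [apply_eq_re_mul_add_im_mul D (c * I)]
    simp
  simp only [dbar, ContinuousLinearMap.comp_apply, ContinuousLinearMap.mul_apply', mul_one, hc,
    hcI]
  apply Complex.ext <;>
    simp only [mul_re, mul_im, conj_re, conj_im, add_re, add_im, ofReal_re, ofReal_im, I_re, I_im,
      div_ofNat_re, div_ofNat_im, one_re, one_im] <;>
    ring

lemma fderiv_eq_comp_of_comp_eq {E F : Type*} [NormedAddCommGroup E] [NormedSpace ℝ E]
    [NormedAddCommGroup F] [NormedSpace ℝ F] {V : E → F} (L : E →L[ℝ] E) (hVL : V ∘ L = V)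
    {x : E} (hV : DifferentiableAt ℝ V (L x)) :
    fderiv ℝ V x = (fderiv ℝ V (L x)).comp L := by
  have hcomp := fderiv_comp x hV L.differentiableAt
  rwa [hVL, L.fderiv] at hcomp

lemma apply_exp_mul_I_mul_eq_of_fderiv_apply_I_mul_eq_zero {E : Type*} [NormedAddCommGroup E]
    [NormedSpace ℝ E] {V : ℂ → E} (hV : Differentiable ℝ V)
    (h : ∀ w, fderiv ℝ V w (I * w) = 0) (θ : ℝ) (z : ℂ) :
    V (exp (θ * I) * z) = V z := by
  have hderiv : ∀ t : ℝ, HasDerivAt (fun t : ℝ => V (exp (t * I) * z)) 0 t := by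
    intro t
    have hcurve : HasDerivAt (fun t : ℝ => exp (t * I) * z) (I * (exp (t * I) * z)) t := by
      refine ((((hasDerivAt_id t).ofReal_comp).mul_const I).cexp.mul_const z).congr_deriv ?_
      simp only [id, ofReal_one, one_mul]
      ring
    have hcomp := (hV _).hasFDerivAt.comp_hasDerivAt t hcurve
    rwa [h] at hcomp
  simpa using is_const_of_deriv_eq_zero (fun t => (hderiv t).differentiableAt)
    (fun t => (hderiv t).deriv) θ 0

theorem stmt1_general (f : ℂ → ℂ) (V : ℂ → ℝ)
    (hA2 : ∀ z : ℂ, ((starRingEnd ℂ) z * f z).im = 0)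
    (hV : ContDiff ℝ 1 V)
    (hA3 : ∀ z : ℂ,
      f z = (1 / 2) * ((fderiv ℝ V z 1 : ℂ) + Complex.I * (fderiv ℝ V z Complex.I : ℂ))) :
    ∀ (z : ℂ) (θ : ℝ),
      f (Complex.exp (θ * Complex.I) * z) = Complex.exp (θ * Complex.I) * f z := by
  intro z θ
  have hf : ∀ w, f w = dbar (fderiv ℝ V w) := hA3
  have hVd : Differentiable ℝ V := hV.differentiable one_ne_zero
  set c := exp (θ * I)
  have hrot : V ∘ ContinuousLinearMap.mul ℝ ℂ c = V := funext fun w =>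
    apply_exp_mul_I_mul_eq_of_fderiv_apply_I_mul_eq_zero hVd
      (fun u => by linarith [im_conj_mul_dbar (fderiv ℝ V u) u, hf u ▸ hA2 u]) θ w
  have hfz : f z = conj c * f (c * z) := by
    rw [hf, hf, fderiv_eq_comp_of_comp_eq _ hrot (hVd _), ContinuousLinearMap.mul_apply',
      dbar_comp_mul]
  have hc : c * conj c = 1 := by
    rw [mul_conj', norm_exp_ofReal_mul_I, ofReal_one, one_pow]
  rw [hfz, ← mul_assoc, hc, one_mul]

/-- If `f : ℂ → ℂ` satisfies (A2) `Im (conj z * f z) = 0` and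
(A3) `f = ∂V/∂z̄` (Wirtinger derivative) for some real-valued C¹ function `V`
with `V 0 = 0`, then `f` is gauge invariant: `f (exp (θ i) * z) = exp (θ i) * f z`. -/
theorem stmt1 (f : ℂ → ℂ) (V : ℂ → ℝ)
    (hA2 : ∀ z : ℂ, ((starRingEnd ℂ) z * f z).im = 0)
    (hV : ContDiff ℝ 1 V) (hV0 : V 0 = 0)
    (hA3 : ∀ z : ℂ,
      f z = (1 / 2) * ((fderiv ℝ V z 1 : ℂ) + Complex.I * (fderiv ℝ V z Complex.I : ℂ))) :
    ∀ (z : ℂ) (θ : ℝ),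
      f (Complex.exp (θ * Complex.I) * z) = Complex.exp (θ * Complex.I) * f z :=
  stmt1_general f V hA2 hV hA3
end

section
/- Let 1 < p, r = p+1, and let f : ℂ → ℂ satisfy (A2), (A3) with V the associated potential. Let v ∈ C_c^∞(ℝⁿ, ℂ). Then Re ∫ (x·v̄(x)) · ∇f(v)(x) dx − Re ∫ (∇v(x)·conj(x f(v(x)))) dx = −(n/2) ∫ V'(v)|v| dx + n ∫ V(v) dx. -/
open MeasureTheory Complex

lemma aux_fderivV (f : ℂ → ℂ) (V : ℂ → ℝ)
    (hA3 : ∀ z : ℂ,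
      f z = (1 / 2) * ((fderiv ℝ V z 1 : ℂ) + Complex.I * (fderiv ℝ V z Complex.I : ℂ)))
    (z w : ℂ) : fderiv ℝ V z w = 2 * (f z * (starRingEnd ℂ) w).re := by
  have hw : w = w.re • (1 : ℂ) + w.im • Complex.I := by
    simp [Complex.real_smul, Complex.re_add_im]
  have hL : fderiv ℝ V z w = w.re * fderiv ℝ V z 1 + w.im * fderiv ℝ V z Complex.I := by
    conv_lhs => rw [hw]
    rw [map_add, _root_.map_smul, _root_.map_smul]; simp
  rw [hL, hA3 z]
  simp [Complex.mul_re, Complex.mul_im, Complex.conj_re, Complex.conj_im]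
  ring

/-- Let `1 < p`, `r = p + 1`, and let `f : ℂ → ℂ` satisfy (A2) and (A3)
with associated potential `V` (`f = ∂V/∂z̄`, Wirtinger). For `v ∈ C_c^∞(ℝⁿ, ℂ)`:
`Re ∫ Σⱼ xⱼ v̄ ∂ⱼ(f∘v) dx − Re ∫ Σⱼ ∂ⱼv conj(xⱼ f(v)) dx
  = −(n/2) ∫ V'(v)|v| dx + n ∫ V(v) dx`,
where `V'(v)|v| = 2 Re (f(v) v̄)`. -/
theorem stmt10 (n : ℕ) (p r : ℝ) (hp : 1 < p) (hr : r = p + 1)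
    (f : ℂ → ℂ) (V : ℂ → ℝ)
    (hf : ContDiff ℝ 1 f) (hf0 : f 0 = 0)
    (hA2 : ∀ z : ℂ, ((starRingEnd ℂ) z * f z).im = 0)
    (hV : ContDiff ℝ 1 V) (hV0 : V 0 = 0)
    (hA3 : ∀ z : ℂ,
      f z = (1 / 2) * ((fderiv ℝ V z 1 : ℂ) + Complex.I * (fderiv ℝ V z Complex.I : ℂ)))
    (v : (Fin n → ℝ) → ℂ) (hv : ContDiff ℝ (⊤ : ℕ∞) v) (hvc : HasCompactSupport v) :
    (∑ j : Fin n, ∫ x : Fin n → ℝ,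
        (x j : ℂ) * (starRingEnd ℂ) (v x) *
          fderiv ℝ (fun y => f (v y)) x (Pi.single j 1)).re -
      (∑ j : Fin n, ∫ x : Fin n → ℝ,
          fderiv ℝ v x (Pi.single j 1) * (starRingEnd ℂ) ((x j : ℂ) * f (v x))).re =
      -((n : ℝ) / 2) * (∫ x : Fin n → ℝ, 2 * (f (v x) * (starRingEnd ℂ) (v x)).re) +
        (n : ℝ) * ∫ x : Fin n → ℝ, V (v x) := by
  have hv1 : ContDiff ℝ 1 v := hv.of_le (by simp)
  have hvd : Differentiable ℝ v := hv1.differentiable one_ne_zero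
  set F : (Fin n → ℝ) → ℂ := fun x => f (v x) with hFdef
  have hFc : ContDiff ℝ 1 F := hf.comp hv1
  have hFd : Differentiable ℝ F := hFc.differentiable one_ne_zero
  have hFsupp : HasCompactSupport F := hvc.comp_left hf0
  set J : ℂ →L[ℝ] ℂ := (Complex.conjCLE : ℂ ≃L[ℝ] ℂ).toContinuousLinearMap with hJdef
  have hJapp : ∀ z : ℂ, J z = (starRingEnd ℂ) z := fun z => rfl
  set c : (Fin n → ℝ) → ℂ := fun x => J (v x) with hcdef
  have hcc : ContDiff ℝ 1 c := J.contDiff.comp hv1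
  set G : (Fin n → ℝ) → ℂ := fun x => F x * c x with hGdef
  have hGc : ContDiff ℝ 1 G := hFc.mul hcc
  have hGd : Differentiable ℝ G := hGc.differentiable one_ne_zero
  set g : (Fin n → ℝ) → ℝ := fun x => (G x).re with hgdef
  have hgc : ContDiff ℝ 1 g := Complex.reCLM.contDiff.comp hGc
  set W : (Fin n → ℝ) → ℝ := fun x => V (v x) with hWdef
  have hWc : ContDiff ℝ 1 W := hV.comp hv1
  set h : (Fin n → ℝ) → ℝ := fun x => g x - W x with hhdef
  have hhc : ContDiff ℝ 1 h := hgc.sub hWc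
  have hGsupp : HasCompactSupport G := hFsupp.mul_right
  have hgsupp : HasCompactSupport g := hGsupp.comp_left (g := Complex.re) rfl
  have hWsupp : HasCompactSupport W := hvc.comp_left hV0
  have hhsupp : HasCompactSupport h := by
    have hsub : Function.support h ⊆ tsupport g ∪ tsupport W := by
      intro x hx
      by_contra hc
      simp only [Set.mem_union, not_or] at hc
      have h1 : g x = 0 := image_eq_zero_of_notMem_tsupport hc.1
      have h2 : W x = 0 := image_eq_zero_of_notMem_tsupport hc.2
      exact hx (by simp [hhdef, h1, h2])
    exact IsCompact.of_isClosed_subset (hgsupp.union hWsupp) isClosed_closure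
      (closure_minimal hsub ((isClosed_tsupport g).union (isClosed_tsupport W)))
  -- derivative of G
  have hDG : ∀ (x : Fin n → ℝ) (w : Fin n → ℝ), fderiv ℝ G x w =
      fderiv ℝ F x w * c x + F x * (starRingEnd ℂ) (fderiv ℝ v x w) := by
    intro x w
    have h1 : HasFDerivAt F (fderiv ℝ F x) x := (hFd x).hasFDerivAt
    have h2 : HasFDerivAt c (J.comp (fderiv ℝ v x)) x :=
      J.hasFDerivAt.comp x (hvd x).hasFDerivAt
    have h3 := (h1.mul' h2).fderiv
    rw [show G = F * c from rfl, h3]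
    simp only [ContinuousLinearMap.add_apply, ContinuousLinearMap.smul_apply,
      ContinuousLinearMap.smulRight_apply, ContinuousLinearMap.coe_comp', Function.comp_apply,
      smul_eq_mul, op_smul_eq_mul, hJapp]
    ring
  -- derivative of g
  have hDg : ∀ (x : Fin n → ℝ) (w : Fin n → ℝ), fderiv ℝ g x w = (fderiv ℝ G x w).re := by
    intro x w
    have h1 : HasFDerivAt G (fderiv ℝ G x) x := (hGd x).hasFDerivAt
    have h2 := (Complex.reCLM.hasFDerivAt.comp x h1).fderiv
    rw [show g = ⇑Complex.reCLM ∘ G from rfl, h2]; rfl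
  -- derivative of W
  have hDW : ∀ (x : Fin n → ℝ) (w : Fin n → ℝ), fderiv ℝ W x w =
      2 * (F x * (starRingEnd ℂ) (fderiv ℝ v x w)).re := by
    intro x w
    have h2 : fderiv ℝ W x = (fderiv ℝ V (v x)).comp (fderiv ℝ v x) :=
      fderiv_comp x (hV.differentiable one_ne_zero (v x)) (hvd x)
    rw [h2]
    exact aux_fderivV f V hA3 (v x) (fderiv ℝ v x w)
  -- derivative of h
  have hDh : ∀ (x : Fin n → ℝ) (w : Fin n → ℝ), fderiv ℝ h x w =
      fderiv ℝ g x w - fderiv ℝ W x w := by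
    intro x w
    rw [show h = g - W from rfl,
      fderiv_sub (hgc.differentiable one_ne_zero x) (hWc.differentiable one_ne_zero x)]
    rfl
  -- continuity and integrability facts
  have hDFcont : ∀ w : Fin n → ℝ, Continuous (fun x => fderiv ℝ F x w) :=
    fun w => (hFc.continuous_fderiv one_ne_zero).clm_apply continuous_const
  have hDvcont : ∀ w : Fin n → ℝ, Continuous (fun x => fderiv ℝ v x w) :=
    fun w => (hv1.continuous_fderiv one_ne_zero).clm_apply continuous_const
  have hDhcont : ∀ w : Fin n → ℝ, Continuous (fun x => fderiv ℝ h x w) :=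
    fun w => (hhc.continuous_fderiv one_ne_zero).clm_apply continuous_const
  have intA : ∀ j : Fin n, Integrable (fun x : Fin n → ℝ =>
      (x j : ℂ) * (starRingEnd ℂ) (v x) * fderiv ℝ F x (Pi.single j 1)) volume := by
    intro j
    apply Continuous.integrable_of_hasCompactSupport
    · exact ((Complex.continuous_ofReal.comp (continuous_apply j)).mul
        (continuous_star.comp hv.continuous)).mul (hDFcont _)
    · exact (HasCompactSupport.fderiv_apply (𝕜 := ℝ) hFsupp (Pi.single j 1)).mul_left
  have intB : ∀ j : Fin n, Integrable (fun x : Fin n → ℝ =>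
      fderiv ℝ v x (Pi.single j 1) * (starRingEnd ℂ) ((x j : ℂ) * F x)) volume := by
    intro j
    apply Continuous.integrable_of_hasCompactSupport
    · exact (hDvcont _).mul (continuous_star.comp
        ((Complex.continuous_ofReal.comp (continuous_apply j)).mul (hFc.continuous)))
    · refine hFsupp.mono ?_
      intro x hx
      simp only [Function.mem_support] at hx ⊢
      intro h0
      exact hx (by simp [h0])
  have intg : Integrable g volume := hgc.continuous.integrable_of_hasCompactSupport hgsupp
  have intW : Integrable W volume := hWc.continuous.integrable_of_hasCompactSupport hWsupp
  have inth : Integrable h volume := hhc.continuous.integrable_of_hasCompactSupport hhsupp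
  have int_xh : ∀ j : Fin n, Integrable (fun x : Fin n → ℝ => x j * h x) volume := by
    intro j
    exact ((continuous_apply j).mul hhc.continuous).integrable_of_hasCompactSupport
      hhsupp.mul_left
  have int_xDh : ∀ j : Fin n, Integrable
      (fun x : Fin n → ℝ => x j * fderiv ℝ h x (Pi.single j 1)) volume := by
    intro j
    exact ((continuous_apply j).mul (hDhcont _)).integrable_of_hasCompactSupport
      (HasCompactSupport.fderiv_apply (𝕜 := ℝ) hhsupp (Pi.single j 1)).mul_left
  -- key identity for each coordinate
  have key : ∀ j : Fin n,
      (∫ x : Fin n → ℝ, (x j : ℂ) * (starRingEnd ℂ) (v x) * fderiv ℝ F x (Pi.single j 1)).re -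
      (∫ x : Fin n → ℝ, fderiv ℝ v x (Pi.single j 1) * (starRingEnd ℂ) ((x j : ℂ) * F x)).re =
      - ∫ x : Fin n → ℝ, h x := by
    intro j
    have e1 : (∫ x : Fin n → ℝ,
        (x j : ℂ) * (starRingEnd ℂ) (v x) * fderiv ℝ F x (Pi.single j 1)).re
        = ∫ x : Fin n → ℝ,
        ((x j : ℂ) * (starRingEnd ℂ) (v x) * fderiv ℝ F x (Pi.single j 1)).re :=
      (ContinuousLinearMap.integral_comp_comm Complex.reCLM (intA j)).symm
    have e2 : (∫ x : Fin n → ℝ,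
        fderiv ℝ v x (Pi.single j 1) * (starRingEnd ℂ) ((x j : ℂ) * F x)).re
        = ∫ x : Fin n → ℝ,
        (fderiv ℝ v x (Pi.single j 1) * (starRingEnd ℂ) ((x j : ℂ) * F x)).re :=
      (ContinuousLinearMap.integral_comp_comm Complex.reCLM (intB j)).symm
    have intA' : Integrable (fun x : Fin n → ℝ =>
        ((x j : ℂ) * (starRingEnd ℂ) (v x) * fderiv ℝ F x (Pi.single j 1)).re) volume :=
      (intA j).re
    have intB' : Integrable (fun x : Fin n → ℝ =>
        (fderiv ℝ v x (Pi.single j 1) * (starRingEnd ℂ) ((x j : ℂ) * F x)).re) volume :=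
      (intB j).re
    rw [e1, e2, ← integral_sub intA' intB']
    have hpt : ∀ x : Fin n → ℝ,
        ((x j : ℂ) * (starRingEnd ℂ) (v x) * fderiv ℝ F x (Pi.single j 1)).re -
        (fderiv ℝ v x (Pi.single j 1) * (starRingEnd ℂ) ((x j : ℂ) * F x)).re =
        x j * fderiv ℝ h x (Pi.single j 1) := by
      intro x
      rw [hDh, hDg, hDG, hDW]
      simp only [hcdef, hJapp, map_mul, Complex.conj_ofReal, Complex.mul_re, Complex.mul_im,
        Complex.conj_re, Complex.conj_im, Complex.ofReal_re, Complex.ofReal_im,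
        Complex.add_re, Complex.add_im]
      ring
    rw [show (fun x : Fin n → ℝ =>
        ((x j : ℂ) * (starRingEnd ℂ) (v x) * fderiv ℝ F x (Pi.single j 1)).re -
        (fderiv ℝ v x (Pi.single j 1) * (starRingEnd ℂ) ((x j : ℂ) * F x)).re) =
        fun x : Fin n → ℝ => x j * fderiv ℝ h x (Pi.single j 1) from funext hpt]
    -- integration by parts
    have hproj : Differentiable ℝ (fun y : Fin n → ℝ => y j) :=
      fun y => ((ContinuousLinearMap.proj j : (Fin n → ℝ) →L[ℝ] ℝ)).differentiableAt
    have hprojD : ∀ y : Fin n → ℝ,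
        fderiv ℝ (fun y : Fin n → ℝ => y j) y = ContinuousLinearMap.proj j := by
      intro y
      exact (ContinuousLinearMap.proj j : (Fin n → ℝ) →L[ℝ] ℝ).fderiv
    have I1 : Integrable (fun x : Fin n → ℝ =>
        fderiv ℝ (fun y : Fin n → ℝ => y j) x (Pi.single j 1) * h x) volume := by
      have : (fun x : Fin n → ℝ =>
          fderiv ℝ (fun y : Fin n → ℝ => y j) x (Pi.single j 1) * h x) = fun x => h x := by
        funext x; rw [hprojD]; simp
      rw [this]; exact inth
    rw [integral_mul_fderiv_eq_neg_fderiv_mul_of_integrable I1 (int_xDh j) (int_xh j) (fun x _ => hproj x)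
      (fun x _ => hhc.differentiable one_ne_zero x)]
    simp only [hprojD, ContinuousLinearMap.proj_apply, Pi.single_eq_same, one_mul]
  -- assemble
  rw [Complex.re_sum, Complex.re_sum, ← Finset.sum_sub_distrib]
  have hsum : ∑ j : Fin n,
      ((∫ x : Fin n → ℝ, (x j : ℂ) * (starRingEnd ℂ) (v x) * fderiv ℝ F x (Pi.single j 1)).re -
       (∫ x : Fin n → ℝ, fderiv ℝ v x (Pi.single j 1) * (starRingEnd ℂ) ((x j : ℂ) * F x)).re) =
      ∑ _j : Fin n, (- ∫ x : Fin n → ℝ, h x) :=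
    Finset.sum_congr rfl fun j _ => key j
  rw [hsum, Finset.sum_const, Finset.card_univ, Fintype.card_fin]
  have hInt2g : ∫ x : Fin n → ℝ, 2 * (F x * (starRingEnd ℂ) (v x)).re
      = 2 * ∫ x : Fin n → ℝ, g x := by
    have hfun : (fun x : Fin n → ℝ => (F x * (starRingEnd ℂ) (v x)).re) = g := rfl
    rw [integral_const_mul, hfun]
  have hInth : ∫ x : Fin n → ℝ, h x = (∫ x : Fin n → ℝ, g x) - ∫ x : Fin n → ℝ, W x := by
    rw [hhdef]; exact integral_sub intg intW
  rw [hInt2g, hInth]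
  simp only [nsmul_eq_mul]
  ring
end
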